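/- Let (𝒰, ℱ) and (𝒵, 𝒮) be measurable spaces, let ℙ_z be a probability measure on 𝒵, let g : 𝒵 → 𝒰 be measurable, and let Φ : 𝒰 → ℝ be measurable. Set Z = ∫_𝒵 exp(−Φ(g(z))) dℙ_z(z), assume 0 < Z < ∞, and assume the pushforward prior g_#ℙ_z is σ-finite. Then the pushforward g_#ℙ_{z|y} of the latent posterior ℙ_{z|y} = ℙ_z.withDensity (z ↦ ENNReal.ofReal (exp(−Φ(g(z)))/Z)) is absolutely continuous with respect to the pushforward prior g_#ℙ_z, and its Radon–Nikodym derivative with respect to g_#ℙ_z equals u ↦ ENNReal.ofReal (exp(−Φ(u))/Z) almost everywhere with respect to g_#ℙ_z. -/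
import Mathlib

open MeasureTheory Real

lemma map_withDensity_comp {𝒰 𝒵 : Type*} [MeasurableSpace 𝒰] [MeasurableSpace 𝒵]
    (μ : Measure 𝒵) (g : 𝒵 → 𝒰) (hg : Measurable g) (f : 𝒰 → ENNReal) (hf : Measurable f) :
    Measure.map g (μ.withDensity (fun z => f (g z))) = (Measure.map g μ).withDensity f := by
  ext s hs
  rw [Measure.map_apply hg hs, withDensity_apply _ (hg hs), withDensity_apply _ hs,
    Measure.restrict_map hg hs, MeasureTheory.lintegral_map hf hg]

/-- The pushforward of the latent posterior is absolutely continuous with respect to the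
pushforward prior, with Radon–Nikodym derivative `u ↦ exp (-Φ u) / Z` a.e. -/
theorem pushforward_posterior_rnDeriv
    {𝒰 𝒵 : Type*} [MeasurableSpace 𝒰] [MeasurableSpace 𝒵]
    (ℙz : Measure 𝒵) [IsProbabilityMeasure ℙz]
    (g : 𝒵 → 𝒰) (hg : Measurable g)
    (Φ : 𝒰 → ℝ) (hΦ : Measurable Φ)
    (Z : ℝ) (hZ : Z = ∫ z, Real.exp (-Φ (g z)) ∂ℙz)
    (hZpos : 0 < Z)
    (hZfin : Integrable (fun z => Real.exp (-Φ (g z))) ℙz)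
    (hsf : SigmaFinite (Measure.map g ℙz)) :
    Measure.map g
        (ℙz.withDensity (fun z => ENNReal.ofReal (Real.exp (-Φ (g z)) / Z))) ≪
      Measure.map g ℙz ∧
    (Measure.map g
        (ℙz.withDensity (fun z => ENNReal.ofReal (Real.exp (-Φ (g z)) / Z)))).rnDeriv
        (Measure.map g ℙz)
      =ᵐ[Measure.map g ℙz]
        fun u => ENNReal.ofReal (Real.exp (-Φ u) / Z) := by
  have hf : Measurable fun u => ENNReal.ofReal (Real.exp (-Φ u) / Z) :=
    (((hΦ.neg).exp.div_const Z)).ennreal_ofReal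
  rw [map_withDensity_comp ℙz g hg _ hf]
  exact ⟨withDensity_absolutelyContinuous _ _,
    Measure.rnDeriv_withDensity (Measure.map g ℙz) hf⟩
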